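/- Let k ≥ 1 and let i₁, i₂ be integers with 0 ≤ i₁, i₂ ≤ k. Then sin(π(i₁+1)/(k+2)) · sin(π(i₂+1)/(k+2)) = sin(π/(k+2)) · Σ_{i₃} sin(π(i₃+1)/(k+2)), where the sum runs over all integers i₃ with |i₁−i₂| ≤ i₃ ≤ i₁+i₂, i₁+i₂+i₃ even, and i₁+i₂+i₃ ≤ 2k. Equivalently, the quantities sin(π(i+1)/(k+2))/sin(π/(k+2)) (the quantum dimensions of the irreducible L(k,0)-modules L(k,i)) are multiplicative with respect to the fusion rules of L(k,0). -/

import Mathlib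

/-!
With `θ = π/(k+2)` and `i₂ ≤ i₁`, the fusion rules allow exactly
`i₃ = i₁ - i₂ + 2j` for `j ≤ m := min i₂ (k - i₁)`. By the product-to-sum formula
`2 sin θ sin((a+2j+1)θ) = cos((a+2j)θ) - cos((a+2j+2)θ)`, so the sum telescopes to
`(cos((i₁-i₂)θ) - cos((i₁-i₂+2m+2)θ))/2`. When the truncation `i₁+i₂+i₃ ≤ 2k` is active,
`(i₁-i₂+2m+2)θ = 2π - (i₁+i₂+2)θ`; in either case the last cosine is `cos((i₁+i₂+2)θ)`, and
`(cos((i₁-i₂)θ) - cos((i₁+i₂+2)θ))/2` is the product of sines on the left.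
-/

open Real Finset

lemma sin_mul_sum_range_sin (θ a : ℝ) (n : ℕ) :
    sin θ * ∑ j ∈ range n, sin (θ * (a + 2 * j + 1)) =
      (cos (θ * a) - cos (θ * (a + 2 * n))) / 2 := by
  induction n with
  | zero => simp
  | succ n ih =>
    have step : 2 * sin θ * sin (θ * (a + 2 * n + 1)) =
        cos (θ * (a + 2 * n)) - cos (θ * (a + 2 * (n + 1 : ℕ))) := by
      rw [mul_right_comm, two_mul_sin_mul_sin]
      push_cast
      ring_nf
    rw [sum_range_succ, mul_add, ih]
    linarith

def fusionRules (k i₁ i₂ : ℕ) : Finset ℕ :=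
  (range (2 * k + 1)).filter fun i₃ => i₁ - i₂ ≤ i₃ ∧ i₂ - i₁ ≤ i₃ ∧ i₃ ≤ i₁ + i₂ ∧
    Even (i₁ + i₂ + i₃) ∧ i₁ + i₂ + i₃ ≤ 2 * k

lemma fusionRules_comm (k i₁ i₂ : ℕ) : fusionRules k i₁ i₂ = fusionRules k i₂ i₁ := by
  unfold fusionRules
  congr 1 with i₃
  rw [add_comm i₁ i₂]
  tauto

lemma fusionRules_eq_image {k i₁ i₂ : ℕ} (h₁ : i₁ ≤ k) (hle : i₂ ≤ i₁) :
    fusionRules k i₁ i₂ = (range (min i₂ (k - i₁) + 1)).image (fun j => i₁ - i₂ + 2 * j) := by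
  ext i₃
  simp only [fusionRules, mem_filter, mem_range, mem_image, Nat.even_iff]
  constructor
  · rintro ⟨_, _, _, _, _, _⟩
    exact ⟨(i₃ - (i₁ - i₂)) / 2, by omega, by omega⟩
  · rintro ⟨j, hj, rfl⟩
    omega

lemma cos_fusion_endpoint {k i₁ i₂ : ℕ} (h₁ : i₁ ≤ k) (hle : i₂ ≤ i₁) :
    cos (π / (k + 2) * (((i₁ - i₂ : ℕ) : ℝ) + 2 * (min i₂ (k - i₁) + 1 : ℕ))) =
      cos (π / (k + 2) * (i₁ + i₂ + 2)) := by
  rcases min_cases i₂ (k - i₁) with ⟨hm, -⟩ | ⟨hm, -⟩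
  · rw [hm]
    push_cast [Nat.cast_sub hle]
    ring_nf
  · have hk : ((k : ℝ) + 2) ≠ 0 := by positivity
    rw [hm, ← cos_two_pi_sub]
    congr 1
    push_cast [Nat.cast_sub hle, Nat.cast_sub h₁]
    field_simp
    ring

theorem statement8_general (k i₁ i₂ : ℕ) (h₁ : i₁ ≤ k) (h₂ : i₂ ≤ k) :
    Real.sin (π * ((i₁ : ℝ) + 1) / ((k : ℝ) + 2)) * Real.sin (π * ((i₂ : ℝ) + 1) / ((k : ℝ) + 2)) =
      Real.sin (π / ((k : ℝ) + 2)) *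
        ∑ i₃ ∈ (Finset.range (2 * k + 1)).filter
            (fun i₃ => i₁ - i₂ ≤ i₃ ∧ i₂ - i₁ ≤ i₃ ∧ i₃ ≤ i₁ + i₂ ∧
              Even (i₁ + i₂ + i₃) ∧ i₁ + i₂ + i₃ ≤ 2 * k),
          Real.sin (π * ((i₃ : ℝ) + 1) / ((k : ℝ) + 2)) := by
  change _ = _ * ∑ i₃ ∈ fusionRules k i₁ i₂, _
  wlog hle : i₂ ≤ i₁ generalizing i₁ i₂ with H
  · rw [mul_comm, H i₂ i₁ h₂ h₁ (by omega), fusionRules_comm]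
  simp only [mul_div_right_comm π]
  set θ := π / ((k : ℝ) + 2)
  have hprod : sin (θ * (i₁ + 1)) * sin (θ * (i₂ + 1)) =
      (cos (θ * ((i₁ - i₂ : ℕ) : ℝ)) - cos (θ * (i₁ + i₂ + 2))) / 2 := by
    rw [Nat.cast_sub hle, eq_div_iff two_ne_zero, mul_comm, ← mul_assoc, two_mul_sin_mul_sin]
    ring_nf
  rw [fusionRules_eq_image h₁ hle, sum_image (fun _ _ _ _ h => by omega)]
  push_cast
  rw [sin_mul_sum_range_sin, cos_fusion_endpoint h₁ hle, hprod]

/-- Quantum dimensions `sin(π(i+1)/(k+2))/sin(π/(k+2))` of the irreducible `L(k,0)`-modules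
`L(k,i)` are multiplicative with respect to the fusion rules of `L(k,0)`:
`sin(π(i₁+1)/(k+2))·sin(π(i₂+1)/(k+2)) = sin(π/(k+2))·Σ_{i₃} sin(π(i₃+1)/(k+2))`, the sum
over all `i₃` with `|i₁-i₂| ≤ i₃ ≤ i₁+i₂`, `i₁+i₂+i₃` even, `i₁+i₂+i₃ ≤ 2k`. -/
theorem statement8 (k i₁ i₂ : ℕ) (hk : 1 ≤ k) (h₁ : i₁ ≤ k) (h₂ : i₂ ≤ k) :
    Real.sin (π * ((i₁ : ℝ) + 1) / ((k : ℝ) + 2)) * Real.sin (π * ((i₂ : ℝ) + 1) / ((k : ℝ) + 2)) =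
      Real.sin (π / ((k : ℝ) + 2)) *
        ∑ i₃ ∈ (Finset.range (2 * k + 1)).filter
            (fun i₃ => i₁ - i₂ ≤ i₃ ∧ i₂ - i₁ ≤ i₃ ∧ i₃ ≤ i₁ + i₂ ∧
              Even (i₁ + i₂ + i₃) ∧ i₁ + i₂ + i₃ ≤ 2 * k),
          Real.sin (π * ((i₃ : ℝ) + 1) / ((k : ℝ) + 2)) :=
  statement8_general k i₁ i₂ h₁ h₂
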